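/- Pearson equation for the generalized Hahn weight of type II (class s = 1): Let a₁, a₂, b₁, b₂ ∈ ℂ with b₁ + k ≠ 0 and b₂ + k ≠ 0 for every integer k ≥ 1, and let N ∈ ℕ. Define ρ : ℤ → ℂ by ρ(x) = (−N)_x (a₁)_x (a₂)_x / ((b₁+1)_x (b₂+1)_x · x!) for x ≥ 0 and ρ(x) = 0 for x < 0. Then with φ(x) = (x−N)(x+a₁)(x+a₂) and ψ(x) = (N−a₁−a₂+b₁+b₂)x² + (Na₁+Na₂−a₁a₂+b₁b₂)x + Na₁a₂, one has φ(x)ρ(x) − φ(x−1)ρ(x−1) + ψ(x)ρ(x) = 0 for every integer x. -/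
import Mathlib


/-- The Pochhammer symbol `(a)_n = a(a+1)⋯(a+n−1)`. -/
noncomputable def poch (a : ℂ) (n : ℕ) : ℂ := ∏ k ∈ Finset.range n, (a + k)

lemma poch_succ (a : ℂ) (n : ℕ) : poch a (n + 1) = poch a n * (a + n) :=
  Finset.prod_range_succ _ _

lemma poch_ne_zero (b : ℂ) (hb : ∀ k : ℕ, 1 ≤ k → b + (k : ℂ) ≠ 0) (n : ℕ) :
    poch (b + 1) n ≠ 0 := by
  unfold poch
  rw [Finset.prod_ne_zero_iff]
  intro k _
  have := hb (k + 1) (Nat.le_add_left 1 k)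
  push_cast at this ⊢
  convert this using 1
  ring

/-- Pearson equation for the generalized Hahn weight of type II
`ρ(x) = (−N)_x (a₁)_x (a₂)_x / ((b₁+1)_x (b₂+1)_x x!)`: `∇(φρ) + ψρ = 0` with
`φ(x) = (x−N)(x+a₁)(x+a₂)` and
`ψ(x) = (N−a₁−a₂+b₁+b₂)x² + (Na₁+Na₂−a₁a₂+b₁b₂)x + Na₁a₂`. -/
theorem gen_hahn_II_pearson (a₁ a₂ b₁ b₂ : ℂ)
    (hb₁ : ∀ k : ℕ, 1 ≤ k → b₁ + (k : ℂ) ≠ 0)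
    (hb₂ : ∀ k : ℕ, 1 ≤ k → b₂ + (k : ℂ) ≠ 0) (N : ℕ) (ρ : ℤ → ℂ)
    (hρneg : ∀ x : ℤ, x < 0 → ρ x = 0)
    (hρ : ∀ x : ℤ, 0 ≤ x →
      ρ x = poch (-(N : ℂ)) x.toNat * poch a₁ x.toNat * poch a₂ x.toNat /
        (poch (b₁ + 1) x.toNat * poch (b₂ + 1) x.toNat * (x.toNat.factorial : ℂ))) :
    ∀ x : ℤ,
      (((x : ℂ) - (N : ℂ)) * ((x : ℂ) + a₁) * ((x : ℂ) + a₂)) * ρ x -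
        ((((x : ℂ) - 1) - (N : ℂ)) * (((x : ℂ) - 1) + a₁) * (((x : ℂ) - 1) + a₂)) *
          ρ (x - 1) +
        (((N : ℂ) - a₁ - a₂ + b₁ + b₂) * (x : ℂ) ^ 2 +
          ((N : ℂ) * a₁ + (N : ℂ) * a₂ - a₁ * a₂ + b₁ * b₂) * (x : ℂ) +
          (N : ℂ) * a₁ * a₂) * ρ x = 0 := by
  intro x
  rcases lt_trichotomy x 0 with hx | hx | hx
  · rw [hρneg x hx, hρneg (x - 1) (by omega)]
    ring
  · subst hx
    rw [hρneg (0 - 1) (by norm_num), hρ 0 le_rfl]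
    simp [poch]
  · -- x ≥ 1
    obtain ⟨n, rfl⟩ : ∃ n : ℕ, x = (n : ℤ) + 1 := ⟨(x - 1).toNat, by omega⟩
    have h1 : ρ ((n : ℤ) + 1) = poch (-(N : ℂ)) (n + 1) * poch a₁ (n + 1) * poch a₂ (n + 1) /
        (poch (b₁ + 1) (n + 1) * poch (b₂ + 1) (n + 1) * ((n + 1).factorial : ℂ)) := by
      rw [hρ _ (by omega)]
      norm_num
    have hd1 := poch_ne_zero b₁ hb₁ n
    have hd2 := poch_ne_zero b₂ hb₂ n
    have hd3 : ((n.factorial : ℂ)) ≠ 0 := Nat.cast_ne_zero.mpr n.factorial_ne_zero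
    have hd4 := hb₁ (n + 1) (by omega)
    have hd5 := hb₂ (n + 1) (by omega)
    have hd6 : ((n : ℂ) + 1) ≠ 0 := Nat.cast_add_one_ne_zero n
    have hrec : ((n : ℂ) + 1) * (((n : ℂ) + 1) + b₁) * (((n : ℂ) + 1) + b₂) *
        ρ ((n : ℤ) + 1) =
        (((n : ℂ)) - (N : ℂ)) * (((n : ℂ)) + a₁) * (((n : ℂ)) + a₂) * ρ ((n : ℤ)) := by
      have h2' : ρ ((n : ℤ)) = poch (-(N : ℂ)) n * poch a₁ n * poch a₂ n /
          (poch (b₁ + 1) n * poch (b₂ + 1) n * ((n).factorial : ℂ)) := by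
        rw [hρ _ (by omega)]; norm_num
      rw [h1, h2', poch_succ, poch_succ, poch_succ, poch_succ, poch_succ,
        Nat.factorial_succ]
      push_cast
      generalize poch (-(N : ℂ)) n = pA
      generalize poch a₁ n = pB
      generalize poch a₂ n = pC
      generalize hp1 : poch (b₁ + 1) n = p1 at hd1
      generalize hp2 : poch (b₂ + 1) n = p2 at hd2
      have e4 : b₁ + 1 + (n : ℂ) ≠ 0 := by
        have := hd4; push_cast at this
        intro h; exact this (by linear_combination h)
      have e5 : b₂ + 1 + (n : ℂ) ≠ 0 := by
        have := hd5; push_cast at this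
        intro h; exact this (by linear_combination h)
      field_simp
      ring
    have hx1 : ((n : ℤ) + 1 - 1) = (n : ℤ) := by ring
    rw [hx1]
    push_cast
    linear_combination hrec
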